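/- arXiv:1311.1597 — 12 statements merged into one kernel-verified Lean document; each statement's English description precedes it below -/
import Mathlib

section
/- Let I ⊆ ℝ be an open interval, M ∈ ℝ, and let u : ℝ → ℝ be three times differentiable on I with u'(x) ≠ 0 on I and u'(x)·u'''(x) − (3/2)·u''(x)² = M·u'(x)² for all x ∈ I. Then the function I₁(x) = (1/2)·u''(x)²/u'(x)³ + M/u'(x) is constant on I. -/
/-!
Wherever `u' ≠ 0`, the derivative of `½ u''²/u'³ + M/u'` equals
`u'' · (u' u''' − (3/2) u''² − M u'²) / u'⁴`, i.e. `u''/u'⁴` times the residual of the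
Schwarzian equation. On a solution the residual vanishes, so the derivative vanishes on the
interval, and the mean value theorem makes the expression constant there.
-/

/-- The first integral `I₁`, written in terms of the values `p = u'` and `q = u''`. -/
noncomputable def schwarzianFirstIntegral (M p q : ℝ) : ℝ :=
  (1/2) * q ^ 2 / p ^ 3 + M / p

theorem hasDerivAt_schwarzianFirstIntegral {p q : ℝ → ℝ} {x r : ℝ} (M : ℝ)
    (hp : HasDerivAt p (q x) x) (hq : HasDerivAt q r x) (hpx : p x ≠ 0) :
    HasDerivAt (fun y => schwarzianFirstIntegral M (p y) (q y))
      (q x * (p x * r - (3/2) * q x ^ 2 - M * p x ^ 2) / p x ^ 4) x := by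
  have h := (((hq.pow 2).const_mul (1/2 : ℝ)).div (hp.pow 3) (pow_ne_zero 3 hpx)).add
    ((hasDerivAt_const x M).div hp hpx)
  refine h.congr_deriv ?_
  simp only [Pi.pow_apply]
  field_simp
  ring

theorem schwarzian_first_integral_I1_general (a b M : ℝ) (u : ℝ → ℝ)
    (hu' : ∀ x ∈ Set.Ioo a b, DifferentiableAt ℝ (deriv u) x)
    (hu'' : ∀ x ∈ Set.Ioo a b, DifferentiableAt ℝ (deriv (deriv u)) x)
    (hne : ∀ x ∈ Set.Ioo a b, deriv u x ≠ 0)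
    (heq : ∀ x ∈ Set.Ioo a b,
        deriv u x * deriv (deriv (deriv u)) x - (3/2) * (deriv (deriv u) x) ^ 2
          = M * (deriv u x) ^ 2) :
    ∀ x ∈ Set.Ioo a b, ∀ y ∈ Set.Ioo a b,
      (1/2) * (deriv (deriv u) x) ^ 2 / (deriv u x) ^ 3 + M / deriv u x
        = (1/2) * (deriv (deriv u) y) ^ 2 / (deriv u y) ^ 3 + M / deriv u y := by
  have hderiv : ∀ x ∈ Set.Ioo a b,
      HasDerivAt (fun y => schwarzianFirstIntegral M (deriv u y) (deriv (deriv u) y)) 0 x := by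
    intro x hx
    have h := hasDerivAt_schwarzianFirstIntegral M (hu' x hx).hasDerivAt (hu'' x hx).hasDerivAt
      (hne x hx)
    rwa [sub_eq_zero.mpr (heq x hx), mul_zero, zero_div] at h
  intro x hx y hy
  exact isOpen_Ioo.is_const_of_deriv_eq_zero isPreconnected_Ioo
    (fun z hz => (hderiv z hz).differentiableAt.differentiableWithinAt)
    (fun z hz => (hderiv z hz).deriv) hx hy

/-- the first integral `I₁ = (1/2)·u''²/u'³ + M/u'` is constant along
solutions of the Schwarzian equation on an open interval. -/
theorem schwarzian_first_integral_I1 (a b M : ℝ) (u : ℝ → ℝ)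
    (hu : ∀ x ∈ Set.Ioo a b, DifferentiableAt ℝ u x)
    (hu' : ∀ x ∈ Set.Ioo a b, DifferentiableAt ℝ (deriv u) x)
    (hu'' : ∀ x ∈ Set.Ioo a b, DifferentiableAt ℝ (deriv (deriv u)) x)
    (hne : ∀ x ∈ Set.Ioo a b, deriv u x ≠ 0)
    (heq : ∀ x ∈ Set.Ioo a b,
        deriv u x * deriv (deriv (deriv u)) x - (3/2) * (deriv (deriv u) x) ^ 2
          = M * (deriv u x) ^ 2) :
    ∀ x ∈ Set.Ioo a b, ∀ y ∈ Set.Ioo a b,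
      (1/2) * (deriv (deriv u) x) ^ 2 / (deriv u x) ^ 3 + M / deriv u x
        = (1/2) * (deriv (deriv u) y) ^ 2 / (deriv u y) ^ 3 + M / deriv u y :=
  schwarzian_first_integral_I1_general a b M u hu' hu'' hne heq
end

section
/- Let I ⊆ ℝ be an open interval, M ∈ ℝ, and let u : ℝ → ℝ be three times differentiable on I with u'(x) ≠ 0 on I and u'(x)·u'''(x) − (3/2)·u''(x)² = M·u'(x)² for all x ∈ I. Then the function I₂(x) = u(x)·((1/2)·u''(x)²/u'(x)³ + M/u'(x)) − u''(x)/u'(x) is constant on I. -/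
/-! Differentiating `I₂` gives the identity
`I₂' = (u' u''' − (3/2) u''² − M u'²) (u u'' − u'²) / u'⁴`, whose first factor vanishes along
solutions, so `I₂` has zero derivative on the interval. -/

noncomputable def schwarzianFirstIntegralI₂ (M : ℝ) (u : ℝ → ℝ) (x : ℝ) : ℝ :=
  u x * ((1/2) * deriv (deriv u) x ^ 2 / deriv u x ^ 3 + M / deriv u x)
    - deriv (deriv u) x / deriv u x

theorem hasDerivAt_schwarzianFirstIntegralI₂ {M x : ℝ} {u : ℝ → ℝ}
    (hu' : DifferentiableAt ℝ (deriv u) x) (hu'' : DifferentiableAt ℝ (deriv (deriv u)) x)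
    (hne : deriv u x ≠ 0) :
    HasDerivAt (schwarzianFirstIntegralI₂ M u)
      ((deriv u x * deriv (deriv (deriv u)) x - (3/2) * deriv (deriv u) x ^ 2
          - M * deriv u x ^ 2) * (u x * deriv (deriv u) x - deriv u x ^ 2) / deriv u x ^ 4) x := by
  have hd1 := (differentiableAt_of_deriv_ne_zero hne).hasDerivAt
  have hd2 := hu'.hasDerivAt
  have hd3 := hu''.hasDerivAt
  have H := (hd1.mul ((((hd3.pow 2).const_mul ((1:ℝ)/2)).div (hd2.pow 3) (pow_ne_zero 3 hne)).add
      ((hasDerivAt_const x M).div hd2 hne))).sub (hd3.div hd2 hne)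
  refine H.congr_deriv ?_
  simp only [Pi.add_apply, Pi.div_apply, Pi.pow_apply]
  field_simp
  ring

theorem schwarzian_first_integral_I2_general (a b M : ℝ) (u : ℝ → ℝ)
    (hu' : ∀ x ∈ Set.Ioo a b, DifferentiableAt ℝ (deriv u) x)
    (hu'' : ∀ x ∈ Set.Ioo a b, DifferentiableAt ℝ (deriv (deriv u)) x)
    (hne : ∀ x ∈ Set.Ioo a b, deriv u x ≠ 0)
    (heq : ∀ x ∈ Set.Ioo a b,
        deriv u x * deriv (deriv (deriv u)) x - (3/2) * (deriv (deriv u) x) ^ 2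
          = M * (deriv u x) ^ 2) :
    ∀ x ∈ Set.Ioo a b, ∀ y ∈ Set.Ioo a b,
      u x * ((1/2) * (deriv (deriv u) x) ^ 2 / (deriv u x) ^ 3 + M / deriv u x)
          - deriv (deriv u) x / deriv u x
        = u y * ((1/2) * (deriv (deriv u) y) ^ 2 / (deriv u y) ^ 3 + M / deriv u y)
          - deriv (deriv u) y / deriv u y := by
  have hI₂ : ∀ z ∈ Set.Ioo a b, HasDerivAt (schwarzianFirstIntegralI₂ M u) 0 z := fun z hz ↦ by
    simpa [sub_eq_zero.mpr (heq z hz)] using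
      hasDerivAt_schwarzianFirstIntegralI₂ (M := M) (hu' z hz) (hu'' z hz) (hne z hz)
  intro x hx y hy
  exact isOpen_Ioo.is_const_of_deriv_eq_zero isPreconnected_Ioo
    (fun z hz ↦ (hI₂ z hz).differentiableAt.differentiableWithinAt)
    (fun z hz ↦ (hI₂ z hz).deriv) hx hy

/-- the first integral `I₂ = u·((1/2)·u''²/u'³ + M/u') − u''/u'` is
constant along solutions of the Schwarzian equation on an open interval. -/
theorem schwarzian_first_integral_I2 (a b M : ℝ) (u : ℝ → ℝ)
    (hu : ∀ x ∈ Set.Ioo a b, DifferentiableAt ℝ u x)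
    (hu' : ∀ x ∈ Set.Ioo a b, DifferentiableAt ℝ (deriv u) x)
    (hu'' : ∀ x ∈ Set.Ioo a b, DifferentiableAt ℝ (deriv (deriv u)) x)
    (hne : ∀ x ∈ Set.Ioo a b, deriv u x ≠ 0)
    (heq : ∀ x ∈ Set.Ioo a b,
        deriv u x * deriv (deriv (deriv u)) x - (3/2) * (deriv (deriv u) x) ^ 2
          = M * (deriv u x) ^ 2) :
    ∀ x ∈ Set.Ioo a b, ∀ y ∈ Set.Ioo a b,
      u x * ((1/2) * (deriv (deriv u) x) ^ 2 / (deriv u x) ^ 3 + M / deriv u x)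
          - deriv (deriv u) x / deriv u x
        = u y * ((1/2) * (deriv (deriv u) y) ^ 2 / (deriv u y) ^ 3 + M / deriv u y)
          - deriv (deriv u) y / deriv u y :=
  schwarzian_first_integral_I2_general a b M u hu' hu'' hne heq
end

section
/- Let I ⊆ ℝ be an open interval, M ∈ ℝ, and let u : ℝ → ℝ be three times differentiable on I with u'(x) ≠ 0 on I and u'(x)·u'''(x) − (3/2)·u''(x)² = M·u'(x)² for all x ∈ I. Then the function I₃(x) = u(x)²·((1/2)·u''(x)²/u'(x)³ + M/u'(x)) − 2·u(x)·u''(x)/u'(x) + 2·u'(x) is constant on I. -/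
/-!
Along any curve `x ↦ (u, u', u'')` the derivative of `I₃` is
`(u² u'' / u'⁴ − 2u / u'²) · (u' u''' − (3/2) u''² − M u'²)`, a multiple of the residual of the
Schwarzian equation. It therefore vanishes along solutions, and a function with zero derivative on
an interval is constant.
-/

open Set

noncomputable def schwarzianI3 (M u₀ u₁ u₂ : ℝ) : ℝ :=
  u₀ ^ 2 * ((1/2) * u₂ ^ 2 / u₁ ^ 3 + M / u₁) - 2 * u₀ * u₂ / u₁ + 2 * u₁

theorem HasDerivAt.schwarzianI3 {M x v₃ : ℝ} {v₀ v₁ v₂ : ℝ → ℝ}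
    (h₀ : HasDerivAt v₀ (v₁ x) x) (h₁ : HasDerivAt v₁ (v₂ x) x) (h₂ : HasDerivAt v₂ v₃ x)
    (hv₁ : v₁ x ≠ 0) :
    HasDerivAt (fun t => schwarzianI3 M (v₀ t) (v₁ t) (v₂ t))
      ((v₀ x ^ 2 * v₂ x / v₁ x ^ 4 - 2 * v₀ x / v₁ x ^ 2)
        * (v₁ x * v₃ - (3/2) * v₂ x ^ 2 - M * v₁ x ^ 2)) x := by
  have hcoeff := (((h₂.pow 2).const_mul (1/2)).div (h₁.pow 3) (pow_ne_zero 3 hv₁)).add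
    ((hasDerivAt_const x M).div h₁ hv₁)
  have h := (((h₀.pow 2).mul hcoeff).sub (((h₀.const_mul 2).mul h₂).div h₁ hv₁)).add
    (h₁.const_mul 2)
  refine h.congr_deriv ?_
  simp only [Pi.pow_apply, Pi.mul_apply, Pi.div_apply, Pi.add_apply]
  field_simp
  ring

theorem schwarzian_first_integral_I3_general (a b M : ℝ) (u : ℝ → ℝ)
    (hu' : ∀ x ∈ Set.Ioo a b, DifferentiableAt ℝ (deriv u) x)
    (hu'' : ∀ x ∈ Set.Ioo a b, DifferentiableAt ℝ (deriv (deriv u)) x)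
    (hne : ∀ x ∈ Set.Ioo a b, deriv u x ≠ 0)
    (heq : ∀ x ∈ Set.Ioo a b,
        deriv u x * deriv (deriv (deriv u)) x - (3/2) * (deriv (deriv u) x) ^ 2
          = M * (deriv u x) ^ 2) :
    ∀ x ∈ Set.Ioo a b, ∀ y ∈ Set.Ioo a b,
      (u x) ^ 2 * ((1/2) * (deriv (deriv u) x) ^ 2 / (deriv u x) ^ 3 + M / deriv u x)
          - 2 * u x * deriv (deriv u) x / deriv u x + 2 * deriv u x
        = (u y) ^ 2 * ((1/2) * (deriv (deriv u) y) ^ 2 / (deriv u y) ^ 3 + M / deriv u y)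
          - 2 * u y * deriv (deriv u) y / deriv u y + 2 * deriv u y := by
  have hI3 : ∀ z ∈ Ioo a b,
      HasDerivAt (fun t => schwarzianI3 M (u t) (deriv u t) (deriv (deriv u) t)) 0 z := by
    intro z hz
    have hu : HasDerivAt u (deriv u z) z := (differentiableAt_of_deriv_ne_zero (hne z hz)).hasDerivAt
    simpa [heq z hz] using
      hu.schwarzianI3 (M := M) (hu' z hz).hasDerivAt (hu'' z hz).hasDerivAt (hne z hz)
  intro x hx y hy
  exact isOpen_Ioo.is_const_of_deriv_eq_zero isPreconnected_Ioo
    (fun z hz => (hI3 z hz).differentiableAt.differentiableWithinAt) (fun z hz => (hI3 z hz).deriv)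
    hx hy

/-- the first integral
`I₃ = u²·((1/2)·u''²/u'³ + M/u') − 2u·u''/u' + 2u'` is constant along solutions of
the Schwarzian equation on an open interval. -/
theorem schwarzian_first_integral_I3 (a b M : ℝ) (u : ℝ → ℝ)
    (hu : ∀ x ∈ Set.Ioo a b, DifferentiableAt ℝ u x)
    (hu' : ∀ x ∈ Set.Ioo a b, DifferentiableAt ℝ (deriv u) x)
    (hu'' : ∀ x ∈ Set.Ioo a b, DifferentiableAt ℝ (deriv (deriv u)) x)
    (hne : ∀ x ∈ Set.Ioo a b, deriv u x ≠ 0)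
    (heq : ∀ x ∈ Set.Ioo a b,
        deriv u x * deriv (deriv (deriv u)) x - (3/2) * (deriv (deriv u) x) ^ 2
          = M * (deriv u x) ^ 2) :
    ∀ x ∈ Set.Ioo a b, ∀ y ∈ Set.Ioo a b,
      (u x) ^ 2 * ((1/2) * (deriv (deriv u) x) ^ 2 / (deriv u x) ^ 3 + M / deriv u x)
          - 2 * u x * deriv (deriv u) x / deriv u x + 2 * deriv u x
        = (u y) ^ 2 * ((1/2) * (deriv (deriv u) y) ^ 2 / (deriv u y) ^ 3 + M / deriv u y)
          - 2 * u y * deriv (deriv u) y / deriv u y + 2 * deriv u y :=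
  schwarzian_first_integral_I3_general a b M u hu' hu'' hne heq
end

section
/- Let I ⊆ ℝ be an open interval and let u : ℝ → ℝ be three times differentiable on I with u'(x) ≠ 0 on I and u'(x)·u'''(x) − (3/2)·u''(x)² = 0 for all x ∈ I. Then the function I₁ᵦ(x) = (x/2)·u''(x)²/u'(x)³ + u''(x)/u'(x)² is constant on I. -/
/-! Along a solution with `M = 0`, the relation `u' u''' = (3/2) u''²` makes the derivative of
`(x/2) u''²/u'³ + u''/u'²` vanish identically: the `x`-terms cancel, and so do the remaining
`u''²/u'³` terms. A function with zero derivative on an interval is constant. -/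

/-- The first integral `I₁ᵦ`, written for `p = u'`, `q = u''`. -/
noncomputable def firstIntegralI1b (p q : ℝ → ℝ) (x : ℝ) : ℝ :=
  x / 2 * q x ^ 2 / p x ^ 3 + q x / p x ^ 2

theorem hasDerivAt_firstIntegralI1b {p q : ℝ → ℝ} {q' x : ℝ} (hp : HasDerivAt p (q x) x)
    (hq : HasDerivAt q q' x) (hpx : p x ≠ 0) (hode : p x * q' - 3 / 2 * q x ^ 2 = 0) :
    HasDerivAt (firstIntegralI1b p q) 0 x := by
  have hq' : q' = 3 / 2 * q x ^ 2 / p x := by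
    field_simp
    linarith
  have hlin : HasDerivAt (fun x : ℝ => x / 2) (1 / 2) x := (hasDerivAt_id x).div_const 2
  refine (((hlin.mul (hq.pow 2)).div (hp.pow 3) (pow_ne_zero 3 hpx)).add
    (hq.div (hp.pow 2) (pow_ne_zero 2 hpx))).congr_deriv ?_
  simp only [Pi.pow_apply, Pi.mul_apply, hq']
  field_simp
  ring

theorem schwarzian_first_integral_I1b_general (a b : ℝ) (u : ℝ → ℝ)
    (hu' : ∀ x ∈ Set.Ioo a b, DifferentiableAt ℝ (deriv u) x)
    (hu'' : ∀ x ∈ Set.Ioo a b, DifferentiableAt ℝ (deriv (deriv u)) x)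
    (hne : ∀ x ∈ Set.Ioo a b, deriv u x ≠ 0)
    (heq : ∀ x ∈ Set.Ioo a b,
        deriv u x * deriv (deriv (deriv u)) x - (3/2) * (deriv (deriv u) x) ^ 2 = 0) :
    ∀ x ∈ Set.Ioo a b, ∀ y ∈ Set.Ioo a b,
      (x / 2) * (deriv (deriv u) x) ^ 2 / (deriv u x) ^ 3
          + deriv (deriv u) x / (deriv u x) ^ 2
        = (y / 2) * (deriv (deriv u) y) ^ 2 / (deriv u y) ^ 3
          + deriv (deriv u) y / (deriv u y) ^ 2 := by
  have hderiv : ∀ x ∈ Set.Ioo a b,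
      HasDerivAt (firstIntegralI1b (deriv u) (deriv (deriv u))) 0 x := fun x hx =>
    hasDerivAt_firstIntegralI1b (hu' x hx).hasDerivAt (hu'' x hx).hasDerivAt (hne x hx) (heq x hx)
  intro x hx y hy
  exact isOpen_Ioo.is_const_of_deriv_eq_zero isPreconnected_Ioo
    (fun z hz => (hderiv z hz).differentiableAt.differentiableWithinAt)
    (fun z hz => (hderiv z hz).deriv) hx hy

/-- for the Schwarzian equation with `M = 0`, the explicitly
`x`-dependent first integral `I₁ᵦ = (x/2)·u''²/u'³ + u''/u'²` is constant on `I`. -/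
theorem schwarzian_first_integral_I1b (a b : ℝ) (u : ℝ → ℝ)
    (hu : ∀ x ∈ Set.Ioo a b, DifferentiableAt ℝ u x)
    (hu' : ∀ x ∈ Set.Ioo a b, DifferentiableAt ℝ (deriv u) x)
    (hu'' : ∀ x ∈ Set.Ioo a b, DifferentiableAt ℝ (deriv (deriv u)) x)
    (hne : ∀ x ∈ Set.Ioo a b, deriv u x ≠ 0)
    (heq : ∀ x ∈ Set.Ioo a b,
        deriv u x * deriv (deriv (deriv u)) x - (3/2) * (deriv (deriv u) x) ^ 2 = 0) :
    ∀ x ∈ Set.Ioo a b, ∀ y ∈ Set.Ioo a b,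
      (x / 2) * (deriv (deriv u) x) ^ 2 / (deriv u x) ^ 3
          + deriv (deriv u) x / (deriv u x) ^ 2
        = (y / 2) * (deriv (deriv u) y) ^ 2 / (deriv u y) ^ 3
          + deriv (deriv u) y / (deriv u y) ^ 2 :=
  schwarzian_first_integral_I1b_general a b u hu' hu'' hne heq
end

section
/- Let u : ℝ → ℝ be twice differentiable with u''(x) + u(x) = 0 for all x ∈ ℝ. Then the function I₅(x) = (u'(x)² − u(x)²)·sin(2x) − 2·u(x)·u'(x)·cos(2x) is constant on ℝ. -/
/-! With `w = u' + i·u` the equation `u'' + u = 0` reads `w' = i·w`, so `w² e^{-2ix}` is constant;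
`I₅` is minus its imaginary part. Equivalently, `I₅' = 0` once `u''` is replaced by `-u`. -/

open Real

theorem hasDerivAt_firstIntegral_I5 {u v : ℝ → ℝ} {x : ℝ}
    (hu : HasDerivAt u (v x) x) (hv : HasDerivAt v (-u x) x) :
    HasDerivAt (fun x => (v x ^ 2 - u x ^ 2) * sin (2 * x) - 2 * u x * v x * cos (2 * x))
      0 x := by
  have hlin : HasDerivAt (fun x : ℝ => 2 * x) 2 x := by
    simpa using (hasDerivAt_id x).const_mul 2
  refine ((((hv.pow 2).sub (hu.pow 2)).mul hlin.sin).sub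
    (((hu.const_mul 2).mul hv).mul hlin.cos)).congr_deriv ?_
  simp only [Pi.sub_apply, Pi.mul_apply, Pi.pow_apply]
  ring

/-- for the harmonic oscillator `u'' + u = 0`, the quantity
`I₅ = (u'² − u²)·sin 2x − 2·u·u'·cos 2x` is constant on `ℝ`. -/
theorem harmonic_oscillator_first_integral_I5 (u : ℝ → ℝ)
    (hu : ∀ x : ℝ, DifferentiableAt ℝ u x)
    (hu' : ∀ x : ℝ, DifferentiableAt ℝ (deriv u) x)
    (heq : ∀ x : ℝ, deriv (deriv u) x + u x = 0) :
    ∀ x y : ℝ,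
      ((deriv u x) ^ 2 - (u x) ^ 2) * Real.sin (2 * x)
          - 2 * u x * deriv u x * Real.cos (2 * x)
        = ((deriv u y) ^ 2 - (u y) ^ 2) * Real.sin (2 * y)
          - 2 * u y * deriv u y * Real.cos (2 * y) := by
  have hI : ∀ x, HasDerivAt (fun x => (deriv u x ^ 2 - u x ^ 2) * sin (2 * x)
      - 2 * u x * deriv u x * cos (2 * x)) 0 x := fun x =>
    hasDerivAt_firstIntegral_I5 (hu x).hasDerivAt
      ((hu' x).hasDerivAt.congr_deriv (eq_neg_of_add_eq_zero_left (heq x)))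
  exact is_const_of_deriv_eq_zero (fun x => (hI x).differentiableAt) (fun x => (hI x).deriv)
end

section
/- Let K ≠ 0 be a real constant and let u : ℤ → ℝ satisfy, for all m ∈ ℤ: u(m+1) ≠ u(m), u(m+2) ≠ u(m), u(m+2) ≠ u(m+1), and (u(m+3) − u(m+1))·(u(m+2) − u(m)) = K·(u(m+3) − u(m+2))·(u(m+1) − u(m)). Then the function J₁(m) = 2·(K/(u(m+2) − u(m)) − 1/(u(m+2) − u(m+1)) − 1/(u(m+1) − u(m))) is independent of m, i.e., J₁(m+1) = J₁(m) for all m ∈ ℤ. -/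
/-- The first integral `J₁` evaluated on three consecutive values `a = u m`, `b = u (m + 1)`,
`c = u (m + 2)`. -/
def discreteSchwarzianJ1 {F : Type*} [Field F] (K a b c : F) : F :=
  2 * (K / (c - a) - 1 / (c - b) - 1 / (b - a))

section
variable {F : Type*} [Field F] {K a b c d : F}

/-- Cleared of denominators, this is `(d - c - b + a)` times the relation `h`. -/
theorem div_sub_one_div_eq_of_discreteSchwarzian (hba : b ≠ a) (hca : c ≠ a) (hdb : d ≠ b)
    (hdc : d ≠ c) (h : (d - b) * (c - a) = K * (d - c) * (b - a)) :
    K / (d - b) - 1 / (d - c) = K / (c - a) - 1 / (b - a) := by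
  have hba' := sub_ne_zero.mpr hba
  have hca' := sub_ne_zero.mpr hca
  have hdb' := sub_ne_zero.mpr hdb
  have hdc' := sub_ne_zero.mpr hdc
  field_simp
  linear_combination (d - c - b + a) * h

/-- The middle term `1 / (c - b)` occurs in both `J₁(m)` and `J₁(m + 1)` and cancels. -/
theorem discreteSchwarzianJ1_shift (hba : b ≠ a) (hca : c ≠ a) (hdb : d ≠ b) (hdc : d ≠ c)
    (h : (d - b) * (c - a) = K * (d - c) * (b - a)) :
    discreteSchwarzianJ1 K b c d = discreteSchwarzianJ1 K a b c := by
  unfold discreteSchwarzianJ1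
  linear_combination 2 * div_sub_one_div_eq_of_discreteSchwarzian hba hca hdb hdc h

end

theorem discrete_schwarzian_first_integral_J1_general (K : ℝ) (u : ℤ → ℝ)
    (h1 : ∀ m : ℤ, u (m + 1) ≠ u m)
    (h2 : ∀ m : ℤ, u (m + 2) ≠ u m)
    (heq : ∀ m : ℤ, (u (m + 3) - u (m + 1)) * (u (m + 2) - u m)
        = K * (u (m + 3) - u (m + 2)) * (u (m + 1) - u m)) :
    ∀ m : ℤ,
      2 * (K / (u (m + 1 + 2) - u (m + 1)) - 1 / (u (m + 1 + 2) - u (m + 1 + 1))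
            - 1 / (u (m + 1 + 1) - u (m + 1)))
        = 2 * (K / (u (m + 2) - u m) - 1 / (u (m + 2) - u (m + 1))
            - 1 / (u (m + 1) - u m)) := by
  intro m
  have hdb : u (m + 3) ≠ u (m + 1) := by convert h2 (m + 1) using 2; ring
  have hdc : u (m + 3) ≠ u (m + 2) := by convert h1 (m + 2) using 2; ring
  rw [show m + 1 + 2 = m + 3 by ring, show m + 1 + 1 = m + 2 by ring]
  exact discreteSchwarzianJ1_shift (h1 m) (h2 m) hdb hdc (heq m)

/-- the quantity
`J₁(m) = 2·(K/(u(m+2) − u(m)) − 1/(u(m+2) − u(m+1)) − 1/(u(m+1) − u(m)))`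
is a first integral of the four-point discrete Schwarzian equation. -/
theorem discrete_schwarzian_first_integral_J1 (K : ℝ) (hK : K ≠ 0) (u : ℤ → ℝ)
    (h1 : ∀ m : ℤ, u (m + 1) ≠ u m)
    (h2 : ∀ m : ℤ, u (m + 2) ≠ u m)
    (h3 : ∀ m : ℤ, u (m + 2) ≠ u (m + 1))
    (heq : ∀ m : ℤ, (u (m + 3) - u (m + 1)) * (u (m + 2) - u m)
        = K * (u (m + 3) - u (m + 2)) * (u (m + 1) - u m)) :
    ∀ m : ℤ,
      2 * (K / (u (m + 1 + 2) - u (m + 1)) - 1 / (u (m + 1 + 2) - u (m + 1 + 1))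
            - 1 / (u (m + 1 + 1) - u (m + 1)))
        = 2 * (K / (u (m + 2) - u m) - 1 / (u (m + 2) - u (m + 1))
            - 1 / (u (m + 1) - u m)) :=
  discrete_schwarzian_first_integral_J1_general K u h1 h2 heq
end

section
/- Let K be a real constant and let u₀, u₁, u₂ be real numbers with u₁ ≠ u₀, u₂ ≠ u₀, u₂ ≠ u₁. Define J₁ = 2·(K/(u₂ − u₀) − 1/(u₂ − u₁) − 1/(u₁ − u₀)), J₂ = K·(u₂ + u₀)/(u₂ − u₀) − 2u₁/(u₂ − u₁) − 2u₁/(u₁ − u₀), and J₃ = 2·(K·u₂·u₀/(u₂ − u₀) − u₁²/(u₂ − u₁) − u₁²/(u₁ − u₀)). Then J₁·J₃ − J₂² = 4K − K². -/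
/-! With `c = K / (u₂ - u₀)` and `s = 1 / (u₂ - u₁) + 1 / (u₁ - u₀)`, the integrals are the
coefficients of the quadratic `J₁/2 · x² − J₂ · x + J₃/2 = c (x − u₂)(x − u₀) − s (x − u₁)²`, so
`J₁ J₃ − J₂²` is minus its discriminant. For any such pencil the discriminant is
`c² (u₂ − u₀)² + 4 c s (u₁ − u₂)(u₁ − u₀)`, and here `c (u₂ − u₀) = K` while
`s (u₁ − u₂)(u₁ − u₀) = −(u₂ − u₀)`, which gives `K² − 4K`. -/

/-- The discriminant of `c (x - p)(x - q) - s (x - r)²`. -/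
theorem discrim_mul_sub_mul_sub_sub_mul_sq {R : Type*} [CommRing R] (c s p q r : R) :
    discrim (c - s) (2 * s * r - c * (p + q)) (c * p * q - s * r ^ 2)
      = c ^ 2 * (p - q) ^ 2 + 4 * c * s * (r - p) * (r - q) := by
  unfold discrim
  ring

theorem one_div_sub_add_one_div_sub_mul {F : Type*} [Field F] {p q r : F} (hrp : r ≠ p)
    (hrq : r ≠ q) : (1 / (p - r) + 1 / (r - q)) * ((r - p) * (r - q)) = q - p := by
  field_simp [sub_ne_zero.mpr hrp.symm, sub_ne_zero.mpr hrq]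
  ring

theorem discrim_schwarzian_pencil {F : Type*} [Field F] (K : F) {p q r : F} (hpq : p ≠ q)
    (hrp : r ≠ p) (hrq : r ≠ q) :
    discrim (K / (p - q) - (1 / (p - r) + 1 / (r - q)))
        (2 * (1 / (p - r) + 1 / (r - q)) * r - K / (p - q) * (p + q))
        (K / (p - q) * p * q - (1 / (p - r) + 1 / (r - q)) * r ^ 2)
      = K ^ 2 - 4 * K := by
  have hc : K / (p - q) * (p - q) = K := div_mul_cancel₀ K (sub_ne_zero.mpr hpq)
  have hs := one_div_sub_add_one_div_sub_mul hrp hrq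
  rw [discrim_mul_sub_mul_sub_sub_mul_sq]
  linear_combination (K / (p - q) * (p - q) + K - 4) * hc + 4 * (K / (p - q)) * hs

/-- the algebraic relation `J₁·J₃ − J₂² = 4K − K²` among the three
first integrals of the four-point discrete Schwarzian equation. -/
theorem discrete_schwarzian_integrals_relation (K u₀ u₁ u₂ : ℝ)
    (h10 : u₁ ≠ u₀) (h20 : u₂ ≠ u₀) (h21 : u₂ ≠ u₁) :
    (2 * (K / (u₂ - u₀) - 1 / (u₂ - u₁) - 1 / (u₁ - u₀))) *
        (2 * (K * u₂ * u₀ / (u₂ - u₀) - u₁ ^ 2 / (u₂ - u₁) - u₁ ^ 2 / (u₁ - u₀)))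
      - (K * (u₂ + u₀) / (u₂ - u₀) - 2 * u₁ / (u₂ - u₁) - 2 * u₁ / (u₁ - u₀)) ^ 2
      = 4 * K - K ^ 2 := by
  have hdiscrim := discrim_schwarzian_pencil K h20 h21.symm h10
  unfold discrim at hdiscrim
  linear_combination -hdiscrim
end

section
/- Let u : ℤ → ℝ satisfy, for all m ∈ ℤ: u(m+1) ≠ u(m), u(m+2) ≠ u(m), u(m+2) ≠ u(m+1), and (u(m+3) − u(m+1))·(u(m+2) − u(m)) = 4·(u(m+3) − u(m+2))·(u(m+1) − u(m)). Then either there exist real constants C₁ ≠ 0, C₂, C₃ with C₁m + C₂ ≠ 0 for all m ∈ ℤ such that u(m) = 1/(C₁m + C₂) + C₃ for all m ∈ ℤ, or there exist real constants C₁ ≠ 0 and C₂ such that u(m) = C₁m + C₂ for all m ∈ ℤ. -/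
/-!
Write `d = Δu`, which never vanishes. The equation becomes `(d₂ + d₁)(d₁ + d₀) = 4 d₂ d₀`, and
for the relative increment `q = Δd / d` it reads `q(m+1) q(m) = 2 q(m+1) - 2 q(m)`: either `q`
vanishes identically, so `d` is constant and `u` affine, or `1/q` drops by `1/2` at each step, so
`q m = 2 / (a - m)`. In the second case `d m (a+1-m)(a+2-m)` is a constant `c`, and since
`c / ((a+1-m)(a+2-m)) = c/(a+1-m) - c/(a+2-m)`, the sum `u` is `c/(a+2-m)` up to a constant.
-/

open fwdDiff

theorem Int.apply_eq_apply_zero_of_forall_add_one {α : Type*} {f : ℤ → α}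
    (h : ∀ m, f (m + 1) = f m) (m : ℤ) : f m = f 0 := by
  simpa using Function.Periodic.int_mul_eq (c := (1 : ℤ)) h m

theorem Int.eq_of_fwdDiff_eq {G : Type*} [AddCommGroup G] {f g : ℤ → G}
    (hΔ : ∀ m, Δ_[1] f m = Δ_[1] g m) (h0 : f 0 = g 0) (m : ℤ) : f m = g m := by
  have hper : ∀ m, f (m + 1) - g (m + 1) = f m - g m := fun m => by
    have := hΔ m
    simp only [fwdDiff] at this
    rw [sub_eq_sub_iff_sub_eq_sub, this]
  have := Int.apply_eq_apply_zero_of_forall_add_one (f := fun m => f m - g m) hper m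
  rwa [h0, sub_self, sub_eq_zero] at this

theorem Int.eq_mul_add_of_fwdDiff_eq_const {R : Type*} [Ring R] {f : ℤ → R} {c : R}
    (h : ∀ m, Δ_[1] f m = c) (m : ℤ) : f m = c * m + f 0 :=
  Int.eq_of_fwdDiff_eq (g := fun m => c * m + f 0)
    (fun m => by rw [h m]; simp only [fwdDiff]; push_cast; rw [mul_add, mul_one]; abel) (by simp) m

theorem Int.eq_div_add_of_fwdDiff_mul_eq {f : ℤ → ℝ} {a c : ℝ} (ha : ∀ m : ℤ, a - m ≠ 0)
    (h : ∀ m : ℤ, Δ_[1] f m * ((a + 1 - m) * (a + 2 - m)) = c) (m : ℤ) :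
    f m = c / (a + 2 - m) + (f 0 - c / (a + 2)) := by
  refine Int.eq_of_fwdDiff_eq (g := fun m => c / (a + 2 - m) + (f 0 - c / (a + 2)))
    (fun m => ?_) (by simp) m
  have h1 : a + 1 - m ≠ 0 := by simpa [sub_sub_eq_add_sub, add_comm] using ha (m - 1)
  have h2 : a + 2 - m ≠ 0 := by simpa [sub_sub_eq_add_sub, add_comm] using ha (m - 2)
  rw [eq_div_iff (mul_ne_zero h1 h2) |>.mpr (h m)]
  simp only [fwdDiff]
  push_cast
  rw [show a + 2 - (m + 1) = a + 1 - m by ring]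
  field_simp
  ring

theorem fwdDiff_schwarzian_four {u : ℤ → ℝ}
    (heq : ∀ m : ℤ, (u (m + 3) - u (m + 1)) * (u (m + 2) - u m)
        = 4 * (u (m + 3) - u (m + 2)) * (u (m + 1) - u m)) (m : ℤ) :
    (Δ_[1] u (m + 2) + Δ_[1] u (m + 1)) * (Δ_[1] u (m + 1) + Δ_[1] u m)
      = 4 * Δ_[1] u (m + 2) * Δ_[1] u m := by
  simp only [fwdDiff, add_assoc]
  norm_num
  linear_combination heq m

theorem fwdDiff_div_recurrence {d : ℤ → ℝ} (hd : ∀ m, d m ≠ 0)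
    (h : ∀ m, (d (m + 2) + d (m + 1)) * (d (m + 1) + d m) = 4 * d (m + 2) * d m) (m : ℤ) :
    (Δ_[1] d / d) (m + 1) * (Δ_[1] d / d) m
      = 2 * (Δ_[1] d / d) (m + 1) - 2 * (Δ_[1] d / d) m := by
  have h0 := hd m
  have h1 := hd (m + 1)
  simp only [Pi.div_apply, fwdDiff, add_assoc, one_add_one_eq_two]
  field_simp
  linear_combination h m

section Recurrence

variable {q : ℤ → ℝ} (hq : ∀ m, q (m + 1) * q m = 2 * q (m + 1) - 2 * q m)
include hq

theorem eq_zero_iff_of_recurrence (m : ℤ) : q m = 0 ↔ q 0 = 0 := by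
  refine (Int.apply_eq_apply_zero_of_forall_add_one (f := fun m => q m = 0) (fun m => ?_) m).to_iff
  have := hq m
  exact propext ⟨fun h => by rw [h] at this; linarith, fun h => by rw [h] at this; linarith⟩

theorem exists_mul_sub_eq_two_of_recurrence (h0 : q 0 ≠ 0) :
    ∃ a : ℝ, ∀ m : ℤ, q m * (a - m) = 2 := by
  have hne (m : ℤ) : q m ≠ 0 := fun h => h0 ((eq_zero_iff_of_recurrence hq m).mp h)
  have hinv (m : ℤ) : Δ_[1] (fun m => (q m)⁻¹) m = -1 / 2 := by
    have h1 := hne m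
    have h2 := hne (m + 1)
    simp only [fwdDiff]
    field_simp
    linear_combination hq m
  refine ⟨2 * (q 0)⁻¹, fun m => ?_⟩
  have := Int.eq_mul_add_of_fwdDiff_eq_const hinv m
  have h1 := hne m
  field_simp at this ⊢
  linear_combination -this

end Recurrence

theorem mul_eq_mul_zero_of_fwdDiff_div_mul_sub_eq_two {d : ℤ → ℝ} {a : ℝ} (hd : ∀ m, d m ≠ 0)
    (ha : ∀ m : ℤ, (Δ_[1] d / d) m * (a - m) = 2) (m : ℤ) :
    d m * ((a + 1 - m) * (a + 2 - m)) = d 0 * ((a + 1) * (a + 2)) := by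
  refine (Int.apply_eq_apply_zero_of_forall_add_one
    (f := fun m : ℤ => d m * ((a + 1 - m) * (a + 2 - m))) (fun m => ?_) m).trans (by simp)
  have h := ha m
  have := hd m
  simp only [Pi.div_apply, fwdDiff] at h
  field_simp at h
  push_cast
  linear_combination (a + 1 - m) * h

theorem eq_mul_add_of_fwdDiff_fwdDiff_eq_zero {u : ℤ → ℝ} (h : ∀ m, Δ_[1] (Δ_[1] u) m = 0)
    (m : ℤ) : u m = Δ_[1] u 0 * m + u 0 :=
  Int.eq_mul_add_of_fwdDiff_eq_const
    (fun m => by simpa using Int.eq_mul_add_of_fwdDiff_eq_const h m) m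

theorem exists_reciprocal_of_fwdDiff_div_mul_sub_eq_two {u : ℤ → ℝ} {a : ℝ}
    (hd : ∀ m, Δ_[1] u m ≠ 0) (ha : ∀ m : ℤ, (Δ_[1] (Δ_[1] u) / Δ_[1] u) m * (a - m) = 2) :
    ∃ C₁ C₂ C₃ : ℝ, C₁ ≠ 0 ∧ (∀ m : ℤ, C₁ * (m : ℝ) + C₂ ≠ 0) ∧
      ∀ m : ℤ, u m = 1 / (C₁ * (m : ℝ) + C₂) + C₃ := by
  have ha0 (m : ℤ) : a - m ≠ 0 := fun h => by simpa [h] using ha m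
  set c := Δ_[1] u 0 * ((a + 1) * (a + 2))
  have hc : c ≠ 0 := by
    have h1 : a + 1 ≠ 0 := by simpa using ha0 (-1)
    have h2 : a + 2 ≠ 0 := by simpa using ha0 (-2)
    exact mul_ne_zero (hd 0) (mul_ne_zero h1 h2)
  have hu := Int.eq_div_add_of_fwdDiff_mul_eq ha0
    (mul_eq_mul_zero_of_fwdDiff_div_mul_sub_eq_two hd ha)
  have hlin (m : ℤ) : -c⁻¹ * m + (a + 2) / c = (a + 2 - m) / c := by ring
  have h2 (m : ℤ) : a + 2 - m ≠ 0 := by simpa [sub_sub_eq_add_sub, add_comm] using ha0 (m - 2)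
  refine ⟨-c⁻¹, (a + 2) / c, u 0 - c / (a + 2), by simpa using hc, fun m => ?_, fun m => ?_⟩
  · rw [hlin]
    exact div_ne_zero (h2 m) hc
  · rw [hlin, one_div_div, hu m]

theorem discrete_schwarzian_K_four_solutions_general (u : ℤ → ℝ)
    (h1 : ∀ m : ℤ, u (m + 1) ≠ u m)
    (heq : ∀ m : ℤ, (u (m + 3) - u (m + 1)) * (u (m + 2) - u m)
        = 4 * (u (m + 3) - u (m + 2)) * (u (m + 1) - u m)) :
    (∃ C₁ C₂ C₃ : ℝ, C₁ ≠ 0 ∧ (∀ m : ℤ, C₁ * (m : ℝ) + C₂ ≠ 0) ∧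
        ∀ m : ℤ, u m = 1 / (C₁ * (m : ℝ) + C₂) + C₃) ∨
    (∃ C₁ C₂ : ℝ, C₁ ≠ 0 ∧ ∀ m : ℤ, u m = C₁ * (m : ℝ) + C₂) := by
  have hd (m : ℤ) : Δ_[1] u m ≠ 0 := sub_ne_zero.mpr (h1 m)
  have hq := fwdDiff_div_recurrence hd (fwdDiff_schwarzian_four heq)
  by_cases h0 : (Δ_[1] (Δ_[1] u) / Δ_[1] u) 0 = 0
  · right
    have hconst (m : ℤ) : Δ_[1] (Δ_[1] u) m = 0 :=
      (div_eq_zero_iff.mp ((eq_zero_iff_of_recurrence hq m).mpr h0)).resolve_right (hd m)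
    exact ⟨Δ_[1] u 0, u 0, hd 0, eq_mul_add_of_fwdDiff_fwdDiff_eq_zero hconst⟩
  · left
    obtain ⟨a, ha⟩ := exists_mul_sub_eq_two_of_recurrence hq h0
    exact exists_reciprocal_of_fwdDiff_div_mul_sub_eq_two hd ha

/-- complete solution of the four-point discrete Schwarzian equation
with `K = 4`: every solution is `1/(C₁m + C₂) + C₃` or affine `C₁m + C₂`. -/
theorem discrete_schwarzian_K_four_solutions (u : ℤ → ℝ)
    (h1 : ∀ m : ℤ, u (m + 1) ≠ u m)
    (h2 : ∀ m : ℤ, u (m + 2) ≠ u m)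
    (h3 : ∀ m : ℤ, u (m + 2) ≠ u (m + 1))
    (heq : ∀ m : ℤ, (u (m + 3) - u (m + 1)) * (u (m + 2) - u m)
        = 4 * (u (m + 3) - u (m + 2)) * (u (m + 1) - u m)) :
    (∃ C₁ C₂ C₃ : ℝ, C₁ ≠ 0 ∧ (∀ m : ℤ, C₁ * (m : ℝ) + C₂ ≠ 0) ∧
        ∀ m : ℤ, u m = 1 / (C₁ * (m : ℝ) + C₂) + C₃) ∨
    (∃ C₁ C₂ : ℝ, C₁ ≠ 0 ∧ ∀ m : ℤ, u m = C₁ * (m : ℝ) + C₂) :=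
  discrete_schwarzian_K_four_solutions_general u h1 heq
end

section
/- Let 0 < K < 4, set φ = arccos(√K / 2), and let C₁ ≠ 0, C₂, C₃ be real constants such that cos(φm + C₂) ≠ 0 for all m ∈ ℤ. Then the sequence u(m) = C₁·tan(φm + C₂) + C₃ satisfies (u(m+3) − u(m+1))·(u(m+2) − u(m)) = K·(u(m+3) − u(m+2))·(u(m+1) − u(m)) for all m ∈ ℤ. -/
/-! With `tan x - tan y = sin (x - y) / (cos x cos y)`, the four differences of
`tan (a + kφ)` appearing in the equation have numerators `sin 2φ, sin 2φ, sin φ, sin φ`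
over the same product of cosines, so the equation reduces to `sin² 2φ = K sin² φ`,
i.e. `K = 4 cos² φ`; the choice `φ = arccos (√K / 2)` achieves exactly this. -/

open Real

def IsDiscreteSchwarzian (K : ℝ) (u : ℤ → ℝ) : Prop :=
  ∀ m : ℤ, (u (m + 3) - u (m + 1)) * (u (m + 2) - u m)
    = K * (u (m + 3) - u (m + 2)) * (u (m + 1) - u m)

theorem IsDiscreteSchwarzian.affine {K : ℝ} {u : ℤ → ℝ} (hu : IsDiscreteSchwarzian K u)
    (a c : ℝ) : IsDiscreteSchwarzian K (fun m => a * u m + c) := fun m => by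
  linear_combination a ^ 2 * hu m

theorem Real.tan_sub_tan {x y : ℝ} (hx : cos x ≠ 0) (hy : cos y ≠ 0) :
    tan x - tan y = sin (x - y) / (cos x * cos y) := by
  rw [sin_sub, tan_eq_sin_div_cos, tan_eq_sin_div_cos]
  field_simp

theorem Real.tan_four_point (a b : ℝ) (h0 : cos a ≠ 0) (h1 : cos (a + b) ≠ 0)
    (h2 : cos (a + 2 * b) ≠ 0) (h3 : cos (a + 3 * b) ≠ 0) :
    (tan (a + 3 * b) - tan (a + b)) * (tan (a + 2 * b) - tan a)
      = 4 * cos b ^ 2 * (tan (a + 3 * b) - tan (a + 2 * b)) * (tan (a + b) - tan a) := by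
  rw [tan_sub_tan h3 h1, tan_sub_tan h2 h0, tan_sub_tan h3 h2, tan_sub_tan h1 h0,
    show a + 3 * b - (a + b) = 2 * b by ring, show a + 2 * b - a = 2 * b by ring,
    show a + 3 * b - (a + 2 * b) = b by ring, show a + b - a = b by ring, sin_two_mul]
  field_simp
  ring

theorem isDiscreteSchwarzian_tan (φ c : ℝ) (hcos : ∀ m : ℤ, cos (φ * m + c) ≠ 0) :
    IsDiscreteSchwarzian (4 * cos φ ^ 2) (fun m => tan (φ * m + c)) := fun m => by
  have hcos' (k : ℤ) {x : ℝ} (hx : x = φ * m + c + k * φ) : cos x ≠ 0 := by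
    rw [hx]
    convert hcos (m + k) using 2
    push_cast
    ring
  dsimp only
  push_cast
  rw [show φ * (m + 3) + c = φ * m + c + 3 * φ by ring,
    show φ * (m + 2) + c = φ * m + c + 2 * φ by ring, show φ * (m + 1) + c = φ * m + c + φ by ring]
  exact tan_four_point _ _ (hcos m) (hcos' 1 (by ring)) (hcos' 2 (by ring)) (hcos' 3 (by ring))

theorem four_mul_cos_arccos_sqrt_div_two_sq {K : ℝ} (hK0 : 0 ≤ K) (hK4 : K ≤ 4) :
    4 * cos (arccos (√K / 2)) ^ 2 = K := by
  have hsqrt : √K ≤ 2 := by nlinarith [sq_sqrt hK0, sqrt_nonneg K]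
  rw [cos_arccos (by linarith [sqrt_nonneg K]) (by linarith), div_pow, sq_sqrt hK0]
  ring

theorem discrete_schwarzian_solution_K_mid_general (K C₁ C₂ C₃ : ℝ)
    (hK0 : 0 < K) (hK4 : K < 4)
    (hcos : ∀ m : ℤ, Real.cos (Real.arccos (Real.sqrt K / 2) * (m : ℝ) + C₂) ≠ 0) :
    let φ : ℝ := Real.arccos (Real.sqrt K / 2)
    let u : ℤ → ℝ := fun m => C₁ * Real.tan (φ * (m : ℝ) + C₂) + C₃
    ∀ m : ℤ, (u (m + 3) - u (m + 1)) * (u (m + 2) - u m)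
        = K * (u (m + 3) - u (m + 2)) * (u (m + 1) - u m) := by
  have h := (isDiscreteSchwarzian_tan _ C₂ hcos).affine C₁ C₃
  rwa [four_mul_cos_arccos_sqrt_div_two_sq hK0.le hK4.le] at h

/-- for `0 < K < 4` and `φ = arccos(√K/2)`, the sequence
`u(m) = C₁·tan(φm + C₂) + C₃` solves the four-point discrete Schwarzian equation. -/
theorem discrete_schwarzian_solution_K_mid (K C₁ C₂ C₃ : ℝ)
    (hK0 : 0 < K) (hK4 : K < 4) (hC₁ : C₁ ≠ 0)
    (hcos : ∀ m : ℤ, Real.cos (Real.arccos (Real.sqrt K / 2) * (m : ℝ) + C₂) ≠ 0) :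
    let φ : ℝ := Real.arccos (Real.sqrt K / 2)
    let u : ℤ → ℝ := fun m => C₁ * Real.tan (φ * (m : ℝ) + C₂) + C₃
    ∀ m : ℤ, (u (m + 3) - u (m + 1)) * (u (m + 2) - u m)
        = K * (u (m + 3) - u (m + 2)) * (u (m + 1) - u m) :=
  discrete_schwarzian_solution_K_mid_general K C₁ C₂ C₃ hK0 hK4 hcos
end

section
/- Let K > 4, set ψ = (1/2)·ln((K − 2 + √(K² − 4K))/2), and let C₁ ≠ 0, C₂, C₃ be real constants with ψm + C₂ ≠ 0 for all m ∈ ℤ (this is automatic when C₂ is irrationally related to ψ; it suffices to assume it). Then the sequence u(m) = C₁·tanh(ψm + C₂) + C₃ satisfies (u(m+3) − u(m+1))·(u(m+2) − u(m)) = K·(u(m+3) − u(m+2))·(u(m+1) − u(m)) for all m ∈ ℤ. -/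
/-!
Differences of `tanh` factor as `tanh x - tanh y = sinh (x - y) / (cosh x cosh y)`, so along an
arithmetic progression of step `ψ` every `cosh` cancels from the Schwarzian cross-ratio, which is
`sinh² 2ψ / sinh² ψ = 4 cosh² ψ`. The choice `ψ = ½ ln μ`, with `μ + μ⁻¹ = K - 2`, makes this `K`.
-/

open Real

lemma Real.tanh_sub_tanh (x y : ℝ) :
    tanh x - tanh y = sinh (x - y) / (cosh x * cosh y) := by
  rw [tanh_eq_sinh_div_cosh, tanh_eq_sinh_div_cosh, sinh_sub]
  have := cosh_pos x
  have := cosh_pos y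
  field_simp

lemma Real.tanh_cross_ratio (x ψ : ℝ) :
    (tanh (x + 3 * ψ) - tanh (x + ψ)) * (tanh (x + 2 * ψ) - tanh x)
      = 4 * cosh ψ ^ 2 * (tanh (x + 3 * ψ) - tanh (x + 2 * ψ)) * (tanh (x + ψ) - tanh x) := by
  simp only [tanh_sub_tanh, add_sub_cancel_left, add_sub_add_left_eq_sub]
  have h3 : 3 * ψ - ψ = 2 * ψ := by ring
  have h2 : 3 * ψ - 2 * ψ = ψ := by ring
  rw [h3, h2, sinh_two_mul]
  have := cosh_pos x
  have := cosh_pos (x + ψ)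
  have := cosh_pos (x + 2 * ψ)
  have := cosh_pos (x + 3 * ψ)
  field_simp
  ring

lemma Real.cosh_sq_half_log {μ : ℝ} (hμ : 0 < μ) :
    cosh ((1 / 2) * log μ) ^ 2 = (μ + 2 + μ⁻¹) / 4 := by
  have h := cosh_two_mul ((1 / 2) * log μ)
  rw [← mul_assoc, show (2 : ℝ) * (1 / 2) = 1 by norm_num, one_mul, cosh_log hμ] at h
  linarith [cosh_sq ((1 / 2) * log μ)]

lemma add_inv_characteristic_root {K : ℝ} (hK : 4 ≤ K) :
    let μ := (K - 2 + √(K ^ 2 - 4 * K)) / 2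
    0 < μ ∧ μ + μ⁻¹ = K - 2 := by
  intro μ
  have hsq : √(K ^ 2 - 4 * K) ^ 2 = K ^ 2 - 4 * K := sq_sqrt (by nlinarith)
  have hμ : 0 < μ := div_pos (by linarith [sqrt_nonneg (K ^ 2 - 4 * K)]) two_pos
  refine ⟨hμ, ?_⟩
  field_simp
  linear_combination hsq / 4

theorem discrete_schwarzian_solution_K_big_general (K C₁ C₂ C₃ : ℝ)
    (hK : 4 < K) :
    let ψ : ℝ := (1/2) * Real.log ((K - 2 + Real.sqrt (K ^ 2 - 4 * K)) / 2)
    let u : ℤ → ℝ := fun m => C₁ * Real.tanh (ψ * (m : ℝ) + C₂) + C₃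
    ∀ m : ℤ, (u (m + 3) - u (m + 1)) * (u (m + 2) - u m)
        = K * (u (m + 3) - u (m + 2)) * (u (m + 1) - u m) := by
  intro ψ u m
  obtain ⟨hμ, hroot⟩ := add_inv_characteristic_root hK.le
  have hcosh : 4 * cosh ψ ^ 2 = K := by
    rw [cosh_sq_half_log hμ]
    linarith
  have hu : ∀ k : ℤ, u (m + k) = C₁ * tanh (ψ * m + C₂ + k * ψ) + C₃ := by
    intro k
    simp only [u]
    push_cast
    ring_nf
  have h := tanh_cross_ratio (ψ * m + C₂) ψ
  rw [hcosh] at h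
  have hu0 : u m = C₁ * tanh (ψ * m + C₂) + C₃ := rfl
  rw [hu 3, hu 1, hu 2, hu0]
  push_cast
  rw [one_mul]
  linear_combination C₁ ^ 2 * h

/-- for `K > 4` and `ψ = (1/2)·ln((K − 2 + √(K² − 4K))/2)`, the
sequence `u(m) = C₁·tanh(ψm + C₂) + C₃` solves the four-point discrete Schwarzian
equation (assuming `ψm + C₂ ≠ 0` for all `m`). -/
theorem discrete_schwarzian_solution_K_big (K C₁ C₂ C₃ : ℝ)
    (hK : 4 < K) (hC₁ : C₁ ≠ 0)
    (hne : ∀ m : ℤ,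
      (1/2) * Real.log ((K - 2 + Real.sqrt (K ^ 2 - 4 * K)) / 2) * (m : ℝ) + C₂ ≠ 0) :
    let ψ : ℝ := (1/2) * Real.log ((K - 2 + Real.sqrt (K ^ 2 - 4 * K)) / 2)
    let u : ℤ → ℝ := fun m => C₁ * Real.tanh (ψ * (m : ℝ) + C₂) + C₃
    ∀ m : ℤ, (u (m + 3) - u (m + 1)) * (u (m + 2) - u m)
        = K * (u (m + 3) - u (m + 2)) * (u (m + 1) - u m) :=
  discrete_schwarzian_solution_K_big_general K C₁ C₂ C₃ hK
end

section
/- Let h > 0, x₀ ∈ ℝ, A, B ∈ ℝ, and set ω = arctan(h/2)/(h/2) and x_m = x₀ + mh. Then the sequence u(m) = A·cos(ω·x_m) + B·sin(ω·x_m) satisfies the discrete harmonic oscillator scheme (u(m+2) − 2u(m+1) + u(m))/h² + (u(m+2) + 2u(m+1) + u(m))/4 = 0 for all m ∈ ℤ. -/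
/-!
On the mesh `x_m = x₀ + m h`, every `u(m) = A cos(ω x_m) + B sin(ω x_m)` obeys the three-term
recurrence `u(m+2) + u(m) = 2 cos(ω h) u(m+1)`, which turns the scheme into
`u(m+1) · ((2c - 2)/h² + (2c + 2)/4)` with `c = cos(ω h)`. The choice of `ω` makes
`ω h = 2 arctan(h/2)`, so `c = (1 - t²)/(1 + t²)` with `t = h/2`, and that factor vanishes.
-/

open Real

theorem Real.cos_two_mul_arctan (t : ℝ) : cos (2 * arctan t) = (1 - t ^ 2) / (1 + t ^ 2) := by
  have hpos : 0 < 1 + t ^ 2 := by positivity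
  rw [cos_two_mul, cos_sq_arctan]
  field_simp
  ring

theorem cos_sin_combination_add_add_sub (A B a d : ℝ) :
    (A * cos (a + d) + B * sin (a + d)) + (A * cos (a - d) + B * sin (a - d))
      = 2 * cos d * (A * cos a + B * sin a) := by
  rw [cos_add, sin_add, cos_sub, sin_sub]
  ring

theorem arctan_half_div_half_mul {h : ℝ} (hh : h ≠ 0) :
    arctan (h / 2) / (h / 2) * h = 2 * arctan (h / 2) := by
  field_simp

theorem scheme_coeff_cos_two_mul_arctan_half {h : ℝ} (hh : h ≠ 0) :
    (2 * cos (2 * arctan (h / 2)) - 2) / h ^ 2 + (2 * cos (2 * arctan (h / 2)) + 2) / 4 = 0 := by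
  have hpos : 0 < 1 + (h / 2) ^ 2 := by positivity
  rw [cos_two_mul_arctan]
  field_simp
  ring

theorem scheme_eq_zero_of_three_term_recurrence {h c u₀ u₁ u₂ : ℝ} (hrec : u₂ + u₀ = 2 * c * u₁)
    (hc : (2 * c - 2) / h ^ 2 + (2 * c + 2) / 4 = 0) :
    (u₂ - 2 * u₁ + u₀) / h ^ 2 + (u₂ + 2 * u₁ + u₀) / 4 = 0 := by
  calc (u₂ - 2 * u₁ + u₀) / h ^ 2 + (u₂ + 2 * u₁ + u₀) / 4
      = ((u₂ + u₀) - 2 * u₁) / h ^ 2 + ((u₂ + u₀) + 2 * u₁) / 4 := by ring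
    _ = u₁ * ((2 * c - 2) / h ^ 2 + (2 * c + 2) / 4) := by rw [hrec]; ring
    _ = 0 := by rw [hc, mul_zero]

/-- with `ω = arctan(h/2)/(h/2)` and `x_m = x₀ + mh`, the sequence
`u(m) = A·cos(ω·x_m) + B·sin(ω·x_m)` solves the invariant discrete harmonic
oscillator scheme. -/
theorem discrete_harmonic_oscillator_solution (h x₀ A B : ℝ) (hh : 0 < h) :
    let ω : ℝ := Real.arctan (h / 2) / (h / 2)
    let u : ℤ → ℝ := fun m => A * Real.cos (ω * (x₀ + (m : ℝ) * h))
      + B * Real.sin (ω * (x₀ + (m : ℝ) * h))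
    ∀ m : ℤ, (u (m + 2) - 2 * u (m + 1) + u m) / h ^ 2
        + (u (m + 2) + 2 * u (m + 1) + u m) / 4 = 0 := by
  intro ω u m
  have hωh : ω * h = 2 * arctan (h / 2) := arctan_half_div_half_mul hh.ne'
  refine scheme_eq_zero_of_three_term_recurrence (c := cos (ω * h)) ?_ ?_
  · have hrec := cos_sin_combination_add_add_sub A B (ω * (x₀ + ((m : ℝ) + 1) * h)) (ω * h)
    simp only [u]
    push_cast
    convert hrec using 4 <;> ring_nf
  · rw [hωh]
    exact scheme_coeff_cos_two_mul_arctan_half hh.ne'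
end

section
/- Let h > 0 and let u : ℤ → ℝ satisfy the discrete harmonic oscillator scheme (u(m+2) − 2u(m+1) + u(m))/h² + (u(m+2) + 2u(m+1) + u(m))/4 = 0 for all m ∈ ℤ. Then the function J(m) = ((u(m+1) − u(m))/h)² + ((u(m+1) + u(m))/2)² is independent of m, i.e., J(m+1) = J(m) for all m ∈ ℤ. -/
/-!
Multiplying the scheme at `m` by `u (m + 2) - u m` turns it into a telescoping difference:
both the squared difference quotient and the squared mean are differences of squares, so
`J (m + 1) - J m` is exactly that multiple of the scheme, which vanishes on solutions.
-/

section DiscreteOscillator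

variable {K : Type*} [Field K]

def discreteOscillatorScheme (h : K) (u : ℤ → K) (m : ℤ) : K :=
  (u (m + 2) - 2 * u (m + 1) + u m) / h ^ 2 + (u (m + 2) + 2 * u (m + 1) + u m) / 4

def discreteOscillatorEnergy (h : K) (u : ℤ → K) (m : ℤ) : K :=
  ((u (m + 1) - u m) / h) ^ 2 + ((u (m + 1) + u m) / 2) ^ 2

theorem discreteOscillatorEnergy_succ_sub (h : K) (u : ℤ → K) (m : ℤ) :
    discreteOscillatorEnergy h u (m + 1) - discreteOscillatorEnergy h u m =
      (u (m + 2) - u m) * discreteOscillatorScheme h u m := by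
  unfold discreteOscillatorEnergy discreteOscillatorScheme
  -- `ring` cannot identify `4⁻¹` with `2⁻¹ ^ 2` in a field of unknown characteristic.
  have four_inv : (4 : K)⁻¹ = 2⁻¹ ^ 2 := by rw [inv_pow]; norm_num
  rw [add_assoc m 1 1, one_add_one_eq_two]
  simp only [div_eq_mul_inv, four_inv]
  ring

theorem discreteOscillatorEnergy_succ {h : K} {u : ℤ → K}
    (hu : ∀ m, discreteOscillatorScheme h u m = 0) (m : ℤ) :
    discreteOscillatorEnergy h u (m + 1) = discreteOscillatorEnergy h u m := by
  rw [← sub_eq_zero, discreteOscillatorEnergy_succ_sub, hu, mul_zero]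

end DiscreteOscillator

theorem discrete_harmonic_oscillator_energy_general (h : ℝ) (u : ℤ → ℝ)
    (heq : ∀ m : ℤ, (u (m + 2) - 2 * u (m + 1) + u m) / h ^ 2
        + (u (m + 2) + 2 * u (m + 1) + u m) / 4 = 0) :
    ∀ m : ℤ,
      ((u (m + 1 + 1) - u (m + 1)) / h) ^ 2 + ((u (m + 1 + 1) + u (m + 1)) / 2) ^ 2
        = ((u (m + 1) - u m) / h) ^ 2 + ((u (m + 1) + u m) / 2) ^ 2 :=
  discreteOscillatorEnergy_succ heq

/-- for the discrete harmonic oscillator scheme on a uniform mesh of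
step `h > 0`, the discrete energy
`J(m) = ((u(m+1) − u(m))/h)² + ((u(m+1) + u(m))/2)²` is a first integral. -/
theorem discrete_harmonic_oscillator_energy (h : ℝ) (hh : 0 < h) (u : ℤ → ℝ)
    (heq : ∀ m : ℤ, (u (m + 2) - 2 * u (m + 1) + u m) / h ^ 2
        + (u (m + 2) + 2 * u (m + 1) + u m) / 4 = 0) :
    ∀ m : ℤ,
      ((u (m + 1 + 1) - u (m + 1)) / h) ^ 2 + ((u (m + 1 + 1) + u (m + 1)) / 2) ^ 2
        = ((u (m + 1) - u m) / h) ^ 2 + ((u (m + 1) + u m) / 2) ^ 2 :=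
  discrete_harmonic_oscillator_energy_general h u heq
end
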